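/- arXiv:1802.08700 — 3 statements merged into one kernel-verified Lean document; each statement's English description precedes it below -/
import Mathlib

section
/- For all natural numbers x₁ ≥ 1 and x₂, …, xₙ: N(x₁, x₂, …, xₙ) = x₁ if and only if x₂ ⊕ x₃ ⊕ ⋯ ⊕ xₙ = 0 (bitwise XOR) and 2^(⌊log₂ x₁⌋ + 1) divides each of x₂, x₃, …, xₙ. -/
/-!
Every option of `(a, x)` is an option of `(a + 1, x)`, and so is `(a, x)` itself; hence the
value is strictly increasing in the auxiliary pile and `N(a, x) ≥ a + N(0, x) = a + ⨁ xᵢ`.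
So `N(x₁, x) = x₁` forces `⨁ xᵢ = 0` and `N(d, x) = d` for every `d ≤ x₁`; if some `xⱼ` had a
bit `2 ^ k ≤ x₁`, the move from `(2 ^ k, x)` that empties the auxiliary pile and clears that
bit of `xⱼ` would reach value `2 ^ k`. Conversely, under the divisibility every move in the
piles `xᵢ` leaves a xor of at least `2 ^ (⌊log₂ x₁⌋ + 1) > x₁`, so up to value `x₁` only the
auxiliary pile matters.
-/

lemma sum_update_lt {n : ℕ} (x : Fin n → ℕ) (i : Fin n) (v : ℕ) (h : v < x i) :
    (∑ j, Function.update x i v j) < ∑ j, x j := by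
  apply Finset.sum_lt_sum
  · intro j _
    rcases eq_or_ne j i with rfl | hj
    · simpa using h.le
    · simp [Function.update_of_ne hj]
  · exact ⟨i, Finset.mem_univ i, by simpa using h⟩

/-- Sprague–Grundy value of the Auxiliary Nim game
`(*a) ⊞ ((*x 0) ⊕ ⋯ ⊕ (*x (n-1)))`, where `x : Fin n → ℕ` lists the piles
`x₂, …, xₙ` and `a` is the auxiliary pile `x₁`.  It is the mex of the
Sprague–Grundy values of the one-move successors: strictly decrease `a`,
or strictly decrease exactly one of the piles `x i`, or do both. -/
noncomputable def NAux {n : ℕ} (a : ℕ) (x : Fin n → ℕ) : ℕ :=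
  sInf {m : ℕ |
    (∀ a', a' < a → NAux a' x ≠ m) ∧
    (∀ (i : Fin n) (v : ℕ), v < x i → NAux a (Function.update x i v) ≠ m) ∧
    (∀ a', a' < a → ∀ (i : Fin n) (v : ℕ), v < x i →
      NAux a' (Function.update x i v) ≠ m)}
termination_by a + ∑ j, x j
decreasing_by
  · exact Nat.add_lt_add_right ‹_› _
  · exact Nat.add_lt_add_left (sum_update_lt x i v ‹_›) a
  · exact Nat.add_lt_add ‹_› (sum_update_lt x i v ‹_›)

/-- The bitwise XOR `x 0 ^^^ x 1 ^^^ ⋯ ^^^ x (n-1)` of the piles. -/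
def xorSum {n : ℕ} (x : Fin n → ℕ) : ℕ := (List.ofFn x).foldr (· ^^^ ·) 0

section

open Function Set

namespace Nat

theorem two_pow_le_xor_of_dvd_of_lt {m p q : ℕ} (hp : 2 ^ m ∣ p) (hq : q < p) :
    2 ^ m ≤ p ^^^ q := by
  by_contra! h
  have hdiv : p / 2 ^ m = q / 2 ^ m := by
    have h0 := Nat.div_eq_of_lt h
    rwa [Nat.xor_div_two_pow, xor_eq_zero_iff] at h0
  have : p ≤ q :=
    calc p = 2 ^ m * (p / 2 ^ m) := (Nat.mul_div_cancel' hp).symm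
      _ = 2 ^ m * (q / 2 ^ m) := by rw [hdiv]
      _ ≤ q := Nat.mul_div_le q _
  omega

theorem exists_testBit_of_not_two_pow_dvd {m y : ℕ} (h : ¬2 ^ m ∣ y) :
    ∃ k < m, y.testBit k := by
  by_contra! hbits
  refine h (Nat.dvd_of_mod_eq_zero (Nat.eq_of_testBit_eq fun k => ?_))
  rw [Nat.testBit_mod_two_pow, Nat.zero_testBit]
  by_cases hk : k < m
  · simp [hk, hbits k hk]
  · simp [hk]

theorem xor_two_pow_lt_of_testBit {y k : ℕ} (h : y.testBit k) : y ^^^ 2 ^ k < y :=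
  Nat.lt_of_testBit k (by simp [h, testBit_two_pow_self]) h fun j hj => by
    simp [testBit_two_pow_of_ne hj.ne]

end Nat

namespace List

theorem foldr_xor_set (l : List ℕ) (i v : ℕ) (hi : i < l.length) :
    (l.set i v).foldr (· ^^^ ·) 0 = l.foldr (· ^^^ ·) 0 ^^^ l[i] ^^^ v := by
  induction l generalizing i with
  | nil => simp at hi
  | cons y l ih =>
    cases i with
    | zero => simp [Nat.xor_comm]
    | succ i =>
      simp only [set_cons_succ, foldr_cons, getElem_cons_succ]
      rw [ih i (by simpa using hi), Nat.xor_assoc, Nat.xor_assoc, Nat.xor_assoc]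

theorem exists_xor_lt_of_lt_foldr_xor {c : ℕ} (l : List ℕ) (h : c < l.foldr (· ^^^ ·) 0) :
    ∃ y ∈ l, c ^^^ l.foldr (· ^^^ ·) 0 ^^^ y < y := by
  induction l generalizing c with
  | nil => simp at h
  | cons y l ih =>
    rcases Nat.lt_xor_cases h with hy | hl
    · exact ⟨y, mem_cons_self, by simpa [Nat.xor_assoc, Nat.xor_comm, Nat.xor_left_comm] using hy⟩
    · obtain ⟨z, hz, hlt⟩ := ih hl
      exact ⟨z, mem_cons_of_mem y hz, by simpa [Nat.xor_assoc] using hlt⟩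

end List

variable {n : ℕ}

theorem xorSum_update (x : Fin n → ℕ) (i : Fin n) (v : ℕ) :
    xorSum (update x i v) = xorSum x ^^^ x i ^^^ v := by
  have hofFn : List.ofFn (update x i v) = (List.ofFn x).set i v := by
    apply List.ext_getElem (by simp)
    intro j hj _
    simp only [List.getElem_ofFn, List.getElem_set, update_apply, Fin.ext_iff, eq_comm]
  rw [xorSum, hofFn, List.foldr_xor_set _ _ _ (by simp), List.getElem_ofFn]
  rfl

theorem exists_update_xorSum_eq_of_lt {x : Fin n → ℕ} {c : ℕ} (h : c < xorSum x) :
    ∃ i, ∃ v < x i, xorSum (update x i v) = c := by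
  obtain ⟨y, hy, hlt⟩ := List.exists_xor_lt_of_lt_foldr_xor _ h
  obtain ⟨i, rfl⟩ := List.mem_ofFn.1 hy
  refine ⟨i, _, hlt, ?_⟩
  rw [xorSum_update]
  simp [xorSum, Nat.xor_comm, Nat.xor_left_comm]


def optionValues (a : ℕ) (x : Fin n → ℕ) : Set ℕ :=
  {m | (∃ a' < a, NAux a' x = m) ∨ ∃ a' ≤ a, ∃ i, ∃ v < x i, NAux a' (update x i v) = m}

theorem optionValues_finite (a : ℕ) (x : Fin n → ℕ) : (optionValues a x).Finite := by
  refine (((finite_Iio a).image fun a' => NAux a' x).union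
    (finite_iUnion fun i => ((finite_Iic a).prod (finite_Iio (x i))).image
      fun p => NAux p.1 (update x i p.2))).subset ?_
  rintro m (⟨a', ha', rfl⟩ | ⟨a', ha', i, v, hv, rfl⟩)
  · exact Or.inl ⟨a', ha', rfl⟩
  · exact Or.inr (mem_iUnion.2 ⟨i, (a', v), ⟨ha', hv⟩, rfl⟩)

theorem NAux_eq_sInf_compl_optionValues (a : ℕ) (x : Fin n → ℕ) :
    NAux a x = sInf (optionValues a x)ᶜ := by
  rw [NAux]
  congr 1
  ext m
  constructor
  · rintro ⟨h₁, h₂, h₃⟩ (⟨a', ha', hm⟩ | ⟨a', ha', i, v, hv, hm⟩)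
    · exact h₁ a' ha' hm
    · rcases ha'.lt_or_eq with ha' | rfl
      · exact h₃ a' ha' i v hv hm
      · exact h₂ i v hv hm
  · intro h
    exact ⟨fun a' ha' hm => h (Or.inl ⟨a', ha', hm⟩),
      fun i v hv hm => h (Or.inr ⟨a, le_rfl, i, v, hv, hm⟩),
      fun a' ha' i v hv hm => h (Or.inr ⟨a', ha'.le, i, v, hv, hm⟩)⟩

theorem NAux_notMem_optionValues (a : ℕ) (x : Fin n → ℕ) : NAux a x ∉ optionValues a x := by
  rw [NAux_eq_sInf_compl_optionValues]
  exact Nat.sInf_mem (optionValues_finite a x).infinite_compl.nonempty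

theorem mem_optionValues_of_lt_NAux {a c : ℕ} {x : Fin n → ℕ} (h : c < NAux a x) :
    c ∈ optionValues a x := by
  rw [NAux_eq_sInf_compl_optionValues] at h
  exact not_not.1 (Nat.notMem_of_lt_sInf h)

theorem NAux_eq_of_mex {a m : ℕ} {x : Fin n → ℕ} (hm : m ∉ optionValues a x)
    (hlt : ∀ c < m, c ∈ optionValues a x) : NAux a x = m :=
  le_antisymm (NAux_eq_sInf_compl_optionValues a x ▸ Nat.sInf_le hm)
    (not_lt.1 fun h => NAux_notMem_optionValues a x (hlt _ h))

theorem optionValues_mono (x : Fin n → ℕ) : Monotone (optionValues · x) := by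
  rintro a b hab m (⟨a', ha', rfl⟩ | ⟨a', ha', i, v, hv, rfl⟩)
  · exact Or.inl ⟨a', ha'.trans_le hab, rfl⟩
  · exact Or.inr ⟨a', ha'.trans hab, i, v, hv, rfl⟩

-- `(a, x)` is itself an option of `(b, x)`, and so are all options of `(a, x)`.
theorem NAux_strictMono (x : Fin n → ℕ) : StrictMono (NAux · x) := by
  intro a b hab
  by_contra! hle
  refine NAux_notMem_optionValues b x ?_
  rcases hle.lt_or_eq with hlt | heq
  · exact optionValues_mono x hab.le (mem_optionValues_of_lt_NAux hlt)
  · exact Or.inl ⟨a, hab, heq.symm⟩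

theorem NAux_zero (x : Fin n → ℕ) : NAux 0 x = xorSum x := by
  apply NAux_eq_of_mex
  · rintro (⟨a', ha', -⟩ | ⟨a', ha', i, v, hv, h⟩)
    · exact absurd ha' (Nat.not_lt_zero a')
    · rw [Nat.le_zero.1 ha', NAux_zero, xorSum_update] at h
      exact hv.ne' (by simpa [Nat.xor_assoc] using h)
  · intro c hc
    obtain ⟨i, v, hv, rfl⟩ := exists_update_xorSum_eq_of_lt hc
    exact Or.inr ⟨0, le_rfl, i, v, hv, NAux_zero _⟩
termination_by ∑ j, x j
decreasing_by all_goals exact sum_update_lt x i v hv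

theorem add_xorSum_le_NAux (a : ℕ) (x : Fin n → ℕ) : a + xorSum x ≤ NAux a x := by
  simpa [NAux_zero] using (NAux_strictMono x).add_le_nat a 0

theorem NAux_eq_self {a : ℕ} {x : Fin n → ℕ} (hx : xorSum x = 0)
    (hmove : ∀ i, ∀ v < x i, a < xorSum (update x i v)) : NAux a x = a := by
  apply NAux_eq_of_mex
  · rintro (⟨a', ha', h⟩ | ⟨a', ha', i, v, hv, h⟩)
    · rw [NAux_eq_self hx fun i v hv => ha'.trans (hmove i v hv)] at h
      exact ha'.ne h
    · have := add_xorSum_le_NAux a' (update x i v)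
      have := hmove i v hv
      omega
  · intro c hc
    exact Or.inl ⟨c, hc, NAux_eq_self hx fun i v hv => hc.trans (hmove i v hv)⟩
termination_by a

theorem xorSum_eq_zero_of_NAux_eq_self {a : ℕ} {x : Fin n → ℕ} (h : NAux a x = a) :
    xorSum x = 0 := by
  have := add_xorSum_le_NAux a x
  omega

theorem NAux_eq_self_of_le {a b : ℕ} {x : Fin n → ℕ} (hb : NAux b x = b) (hab : a ≤ b) :
    NAux a x = a := by
  have hlow := add_xorSum_le_NAux a x
  have hup := (NAux_strictMono x).add_le_nat (b - a) a
  rw [Nat.sub_add_cancel hab, hb] at hup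
  omega

-- From `(2 ^ k, x)`, emptying the bit `2 ^ k` of `x j` together with the auxiliary pile reaches
-- the Nim position of value `2 ^ k`.
theorem two_pow_dvd_of_NAux_eq_self {a : ℕ} {x : Fin n → ℕ} (ha : a ≠ 0) (h : NAux a x = a)
    (j : Fin n) : 2 ^ (Nat.log 2 a + 1) ∣ x j := by
  by_contra hdvd
  obtain ⟨k, hk, hbit⟩ := Nat.exists_testBit_of_not_two_pow_dvd hdvd
  have hka : 2 ^ k ≤ a :=
    (Nat.pow_le_pow_right two_pos (Nat.lt_succ_iff.1 hk)).trans (Nat.pow_log_le_self 2 ha)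
  refine NAux_notMem_optionValues (2 ^ k) x
    (Or.inr ⟨0, Nat.zero_le _, j, _, Nat.xor_two_pow_lt_of_testBit hbit, ?_⟩)
  rw [NAux_eq_self_of_le h hka, NAux_zero, xorSum_update, xorSum_eq_zero_of_NAux_eq_self h,
    Nat.zero_xor, ← Nat.xor_assoc, Nat.xor_self, Nat.zero_xor]

end

theorem auxNim_eq_aux_iff_general {n : ℕ} (x₁ : ℕ) (hx₁ : 1 ≤ x₁)
    (x : Fin n → ℕ) :
    NAux x₁ x = x₁ ↔
      (xorSum x = 0 ∧ ∀ i : Fin n, 2 ^ (Nat.log 2 x₁ + 1) ∣ x i) := by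
  refine ⟨fun h => ⟨xorSum_eq_zero_of_NAux_eq_self h,
    two_pow_dvd_of_NAux_eq_self (Nat.one_le_iff_ne_zero.1 hx₁) h⟩, ?_⟩
  rintro ⟨hx, hdvd⟩
  refine NAux_eq_self hx fun i v hv => ?_
  rw [xorSum_update, hx, Nat.zero_xor]
  exact (Nat.lt_pow_succ_log_self one_lt_two x₁).trans_le
    (Nat.two_pow_le_xor_of_dvd_of_lt (hdvd i) hv)

/-- `N(x₁, x₂, …, xₙ) = x₁` iff `x₂ ⊕ ⋯ ⊕ xₙ = 0` and
`2 ^ (⌊log₂ x₁⌋ + 1)` divides each of `x₂, …, xₙ`. -/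
theorem auxNim_eq_aux_iff {n : ℕ} (hn : 1 ≤ n) (x₁ : ℕ) (hx₁ : 1 ≤ x₁)
    (x : Fin n → ℕ) :
    NAux x₁ x = x₁ ↔
      (xorSum x = 0 ∧ ∀ i : Fin n, 2 ^ (Nat.log 2 x₁ + 1) ∣ x i) :=
  auxNim_eq_aux_iff_general x₁ hx₁ x
end

section
/- For all natural numbers b, c and j ≥ 1: if m is the j-th gap in b ⊕ c, then N(j − 1, b, c) ≥ m. -/
/-!
For `a' < a`, the position `(a', b, c)` and all of its options are options of `(a, b, c)`, so
`N(a, b, c)` is strictly increasing in `a`. Every value `N(a, b, c)` is a gap: `N(0, b, c) = b ⊕ c`, and for `a ≥ 1` the diagonal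
moves to `(0, b', c)` and `(0, b, c')` exclude all values `b' ⊕ c` and `b ⊕ c'`, which are
exactly the non-gaps. A strictly increasing sequence of gaps dominates the increasing
enumeration of the gaps.
-/

/-- Sprague–Grundy value of the Auxiliary Nim game `(*a) ⊞ ((*b) ⊕ (*c))`:
the mex of the Sprague–Grundy values of the one-move successors, which are
`(a',b,c)` with `a' < a`, `(a,b',c)` with `b' < b`, `(a,b,c')` with `c' < c`,
`(a',b',c)` with `a' < a, b' < b`, and `(a',b,c')` with `a' < a, c' < c`. -/
noncomputable def N3 (a b c : ℕ) : ℕ :=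
  sInf {m : ℕ |
    (∀ a', a' < a → N3 a' b c ≠ m) ∧
    (∀ b', b' < b → N3 a b' c ≠ m) ∧
    (∀ c', c' < c → N3 a b c' ≠ m) ∧
    (∀ a', a' < a → ∀ b', b' < b → N3 a' b' c ≠ m) ∧
    (∀ a', a' < a → ∀ c', c' < c → N3 a' b c' ≠ m)}
termination_by a + b + c
decreasing_by all_goals omega

/-- `m` is a gap in `b ⊕ c`: either `m = b ^^^ c`, or, at the largest bit
index `i` where `m` and `b ^^^ c` differ, `m` has bit `1` while `b` and `c`
both have bit `0`. -/
def IsGap (b c m : ℕ) : Prop :=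
  m = b ^^^ c ∨
  ∃ i : ℕ, (∀ j, i < j → m.testBit j = (b ^^^ c).testBit j) ∧
    m.testBit i ≠ (b ^^^ c).testBit i ∧
    m.testBit i = true ∧ b.testBit i = false ∧ c.testBit i = false

def AvoidsOptions (a b c m : ℕ) : Prop :=
  (∀ a', a' < a → N3 a' b c ≠ m) ∧
  (∀ b', b' < b → N3 a b' c ≠ m) ∧
  (∀ c', c' < c → N3 a b c' ≠ m) ∧
  (∀ a', a' < a → ∀ b', b' < b → N3 a' b' c ≠ m) ∧
  (∀ a', a' < a → ∀ c', c' < c → N3 a' b c' ≠ m)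

theorem N3_eq_sInf (a b c : ℕ) : N3 a b c = sInf {m | AvoidsOptions a b c m} := by
  rw [N3]; rfl

theorem exists_avoidsOptions (a b c : ℕ) : ∃ m, AvoidsOptions a b c m := by
  classical
  let values := (Finset.range (a + 1) ×ˢ Finset.range (b + 1) ×ˢ Finset.range (c + 1)).image
    fun p => N3 p.1 p.2.1 p.2.2
  obtain ⟨m, hm⟩ := Infinite.exists_notMem_finset values
  have hne : ∀ x y z, x ≤ a → y ≤ b → z ≤ c → N3 x y z ≠ m := fun x y z hx hy hz h =>
    hm <| Finset.mem_image.2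
      ⟨(x, y, z), by simp only [Finset.mem_product, Finset.mem_range]; omega, h⟩
  exact ⟨m, fun _ ha => hne _ _ _ ha.le le_rfl le_rfl, fun _ hb => hne _ _ _ le_rfl hb.le le_rfl,
    fun _ hc => hne _ _ _ le_rfl le_rfl hc.le, fun _ ha _ hb => hne _ _ _ ha.le hb.le le_rfl,
    fun _ ha _ hc => hne _ _ _ ha.le le_rfl hc.le⟩

theorem avoidsOptions_N3 (a b c : ℕ) : AvoidsOptions a b c (N3 a b c) := by
  rw [N3_eq_sInf]; exact Nat.sInf_mem (exists_avoidsOptions a b c)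

theorem N3_le_of_avoidsOptions {a b c m : ℕ} (h : AvoidsOptions a b c m) : N3 a b c ≤ m := by
  rw [N3_eq_sInf]; exact Nat.sInf_le h

theorem AvoidsOptions.of_lt {a a' b c m : ℕ} (h : AvoidsOptions a b c m) (ha : a' < a) :
    AvoidsOptions a' b c m :=
  ⟨fun a'' h'' => h.1 a'' (h''.trans ha), h.2.2.2.1 a' ha, h.2.2.2.2 a' ha,
    fun a'' h'' => h.2.2.2.1 a'' (h''.trans ha), fun a'' h'' => h.2.2.2.2 a'' (h''.trans ha)⟩

theorem N3_strictMono_left (b c : ℕ) : StrictMono fun a => N3 a b c := fun a' a ha =>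
  lt_of_le_of_ne (N3_le_of_avoidsOptions ((avoidsOptions_N3 a b c).of_lt ha))
    ((avoidsOptions_N3 a b c).1 a' ha)

theorem lt_of_testBit_msb_xor {x y i : ℕ} (hi : (x ^^^ y).testBit i = true)
    (htop : ∀ j, i < j → (x ^^^ y).testBit j = false) (hy : y.testBit i = true) : x < y := by
  refine Nat.lt_of_testBit i ?_ hy fun j hj => ?_
  · simpa [Nat.testBit_xor, hy] using hi
  · simpa [Nat.testBit_xor] using htop j hj

theorem xor_le_of_isGap {b c m : ℕ} (h : IsGap b c m) : b ^^^ c ≤ m := by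
  rcases h with rfl | ⟨i, htop, hne, hmi, -, -⟩
  · exact le_rfl
  · refine (Nat.lt_of_testBit i ?_ hmi fun j hj => (htop j hj).symm).le
    simpa [hmi] using hne.symm

/-- At the top bit where a non-gap `v` differs from `b ⊕ c`, one of `b`, `c` has a `1`;
clearing it there gives a smaller heap whose Nim sum with the other one is `v`. -/
theorem isGap_of_forall_xor_ne {b c v : ℕ} (hb : ∀ b' < b, b' ^^^ c ≠ v)
    (hc : ∀ c' < c, b ^^^ c' ≠ v) : IsGap b c v := by
  by_contra hgap
  have hne : v ^^^ (b ^^^ c) ≠ 0 := fun h => hgap (Or.inl (xor_eq_zero_iff.1 h))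
  obtain ⟨i, hi, htop⟩ := Nat.exists_most_significant_bit hne
  have hbc : b.testBit i = true ∨ c.testBit i = true := by
    by_contra! h
    simp only [ne_eq, Bool.not_eq_true] at h
    have hvi : v.testBit i = true := by simpa [Nat.testBit_xor, h] using hi
    refine hgap (Or.inr ⟨i, fun j hj => ?_, ?_, hvi, h⟩)
    · simpa [Nat.testBit_xor] using htop j hj
    · simp [Nat.testBit_xor, h, hvi]
  rcases hbc with hbi | hci
  · have hxor : v ^^^ c ^^^ b = v ^^^ (b ^^^ c) := by ac_rfl
    exact hb _ (lt_of_testBit_msb_xor (hxor ▸ hi) (hxor ▸ htop) hbi)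
      (Nat.xor_xor_cancel_right v c)
  · have hxor : v ^^^ b ^^^ c = v ^^^ (b ^^^ c) := by ac_rfl
    exact hc _ (lt_of_testBit_msb_xor (hxor ▸ hi) (hxor ▸ htop) hci)
      (by rw [Nat.xor_comm v b, ← Nat.xor_assoc, Nat.xor_self, Nat.zero_xor])

theorem N3_zero (b c : ℕ) : N3 0 b c = b ^^^ c := by
  have h := avoidsOptions_N3 0 b c
  have ih_b : ∀ b' < b, N3 0 b' c = b' ^^^ c := fun b' _ => N3_zero b' c
  have ih_c : ∀ c' < c, N3 0 b c' = b ^^^ c' := fun c' _ => N3_zero b c'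
  refine le_antisymm (N3_le_of_avoidsOptions ⟨by simp, ?_, ?_, by simp, by simp⟩)
    (xor_le_of_isGap (isGap_of_forall_xor_ne ?_ ?_))
  · exact fun b' hb' => ih_b b' hb' ▸ fun heq => hb'.ne (Nat.xor_left_injective heq)
  · exact fun c' hc' => ih_c c' hc' ▸ fun heq => hc'.ne (Nat.xor_right_injective heq)
  · exact fun b' hb' => ih_b b' hb' ▸ h.2.1 b' hb'
  · exact fun c' hc' => ih_c c' hc' ▸ h.2.2.1 c' hc'
termination_by b + c

theorem isGap_N3 (a b c : ℕ) : IsGap b c (N3 a b c) := by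
  cases a with
  | zero => rw [N3_zero]; exact Or.inl rfl
  | succ a =>
    have h := avoidsOptions_N3 (a + 1) b c
    refine isGap_of_forall_xor_ne (fun b' hb' => ?_) (fun c' hc' => ?_)
    · rw [← N3_zero]; exact h.2.2.2.1 0 a.succ_pos b' hb'
    · rw [← N3_zero]; exact h.2.2.2.2 0 a.succ_pos c' hc'

theorem gap_lower_bound_general (b c j m : ℕ)
    (hm : m = Nat.nth (fun x => IsGap b c x) (j - 1)) :
    m ≤ N3 (j - 1) b c :=
  hm ▸ Nat.nth_le_of_strictMonoOn_of_mapsTo _ (fun a _ => isGap_N3 a b c)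
    ((N3_strictMono_left b c).strictMonoOn _)

/-- If `m` is the `j`-th gap in `b ⊕ c` (`j ≥ 1`, i.e. the `(j-1)`-st smallest
element, 0-indexed, of the infinite set of gaps), then `N(j-1, b, c) ≥ m`. -/
theorem gap_lower_bound (b c j m : ℕ) (hj : 1 ≤ j)
    (hm : m = Nat.nth (fun x => IsGap b c x) (j - 1)) :
    m ≤ N3 (j - 1) b c :=
  gap_lower_bound_general b c j m hm
end

section
/- For all natural numbers b, c ≥ 1: A(b, c) ≥ min(A(b − 1, c), A(b, c − 1)). -/
/-- `A3 b c` is the least `a` such that `N3 a b c = a + b + c`. -/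
noncomputable def A3 (b c : ℕ) : ℕ := sInf {a : ℕ | N3 a b c = a + b + c}

/-- The set of values excluded (not taken by any option) at position `(a,b,c)`. -/
def T3 (a b c : ℕ) : Set ℕ := {m : ℕ |
    (∀ a', a' < a → N3 a' b c ≠ m) ∧
    (∀ b', b' < b → N3 a b' c ≠ m) ∧
    (∀ c', c' < c → N3 a b c' ≠ m) ∧
    (∀ a', a' < a → ∀ b', b' < b → N3 a' b' c ≠ m) ∧
    (∀ a', a' < a → ∀ c', c' < c → N3 a' b c' ≠ m)}

lemma N3_eq (a b c : ℕ) : N3 a b c = sInf (T3 a b c) := by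
  rw [N3]; rfl

lemma N3_le_aux : ∀ n a b c : ℕ, a + b + c ≤ n → N3 a b c ≤ a + b + c := by
  intro n
  induction n with
  | zero =>
    intro a b c h
    rw [N3_eq]
    refine Nat.sInf_le ⟨?_, ?_, ?_, ?_, ?_⟩ <;> intro x hx <;> omega
  | succ n ih =>
    intro a b c h
    rw [N3_eq]
    refine Nat.sInf_le ⟨?_, ?_, ?_, ?_, ?_⟩
    · intro a' ha'; have := ih a' b c (by omega); omega
    · intro b' hb'; have := ih a b' c (by omega); omega
    · intro c' hc'; have := ih a b c' (by omega); omega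
    · intro a' ha' b' hb'; have := ih a' b' c (by omega); omega
    · intro a' ha' c' hc'; have := ih a' b c' (by omega); omega

/-- Every move strictly decreases the total, so the Grundy value is at most the total. -/
lemma N3_le (a b c : ℕ) : N3 a b c ≤ a + b + c := N3_le_aux (a + b + c) a b c le_rfl

lemma sum_mem_T3 (a b c : ℕ) : a + b + c ∈ T3 a b c := by
  refine ⟨?_, ?_, ?_, ?_, ?_⟩
  · intro a' ha'; have := N3_le a' b c; omega
  · intro b' hb'; have := N3_le a b' c; omega
  · intro c' hc'; have := N3_le a b c'; omega
  · intro a' ha' b' hb'; have := N3_le a' b' c; omega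
  · intro a' ha' c' hc'; have := N3_le a' b c'; omega

/-- The mex is itself an excluded value. -/
lemma N3_mem_T3 (a b c : ℕ) : N3 a b c ∈ T3 a b c := by
  rw [N3_eq]
  exact Nat.sInf_mem ⟨a + b + c, sum_mem_T3 a b c⟩

lemma notMem_T3_of_lt {m a b c : ℕ} (h : m < N3 a b c) : m ∉ T3 a b c := by
  rw [N3_eq] at h
  exact Nat.notMem_of_lt_sInf h

/-- Not in `T3` means some option has value `m`. -/
lemma cases_of_notMem_T3 {m a b c : ℕ} (h : m ∉ T3 a b c) :
    (∃ a' < a, N3 a' b c = m) ∨ (∃ b' < b, N3 a b' c = m) ∨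
    (∃ c' < c, N3 a b c' = m) ∨ (∃ a' < a, ∃ b' < b, N3 a' b' c = m) ∨
    (∃ a' < a, ∃ c' < c, N3 a' b c' = m) := by
  by_contra hc
  push_neg at hc
  obtain ⟨h1, h2, h3, h4, h5⟩ := hc
  exact h ⟨fun a' ha' => h1 a' ha', fun b' hb' => h2 b' hb',
    fun c' hc' => h3 c' hc', fun a' ha' b' hb' => h4 a' ha' b' hb',
    fun a' ha' c' hc' => h5 a' ha' c' hc'⟩

/-- The Grundy value strictly increases in `a`: every option of `(a,b,c)`, and
`(a,b,c)` itself, is an option of `(a+1,b,c)`, and mex is monotone. -/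
lemma N3_succ_gt (a b c : ℕ) : N3 a b c + 1 ≤ N3 (a + 1) b c := by
  by_contra h
  push_neg at h
  have hmem := N3_mem_T3 (a + 1) b c
  obtain ⟨h1, h2, h3, h4, h5⟩ := hmem
  rcases Nat.lt_or_ge (N3 (a + 1) b c) (N3 a b c) with hlt | hge
  · rcases cases_of_notMem_T3 (notMem_T3_of_lt hlt) with
      ⟨a', ha', he⟩ | ⟨b', hb', he⟩ | ⟨c', hc', he⟩ | ⟨a', ha', b', hb', he⟩ |
      ⟨a', ha', c', hc', he⟩
    · exact h1 a' (by omega) he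
    · exact h4 a (by omega) b' hb' he
    · exact h5 a (by omega) c' hc' he
    · exact h4 a' (by omega) b' hb' he
    · exact h5 a' (by omega) c' hc' he
  · have heq : N3 a b c = N3 (a + 1) b c := by omega
    exact h1 a (by omega) heq

/-- Once `N3 a b c = a + b + c`, this persists for all larger `a`. -/
lemma N3_upclosed {a b c : ℕ} (h : N3 a b c = a + b + c) :
    ∀ a₂, a ≤ a₂ → N3 a₂ b c = a₂ + b + c := by
  intro a₂ ha₂
  induction a₂, ha₂ using Nat.le_induction with
  | base => exact h
  | succ n hn ih =>
    have h1 := N3_succ_gt n b c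
    have h2 := N3_le (n + 1) b c
    omega

lemma N3_zero_zero (c : ℕ) : N3 0 0 c = c := by
  induction c using Nat.strong_induction_on with
  | _ c ih =>
    rw [N3_eq]
    have h1 : c ∈ T3 0 0 c := by
      refine ⟨?_, ?_, ?_, ?_, ?_⟩ <;> intro x hx <;> try omega
      intro hx2
      rw [ih x hx] at hx2; omega
    have h2 : ∀ m < c, m ∉ T3 0 0 c := by
      intro m hm hmem
      exact hmem.2.2.1 m hm (ih m hm)
    have hne : (T3 0 0 c).Nonempty := ⟨c, h1⟩
    have := Nat.sInf_mem hne
    have h3 := Nat.sInf_le h1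
    rcases Nat.lt_or_ge (sInf (T3 0 0 c)) c with hlt | hge
    · exact absurd this (h2 _ hlt)
    · omega

/-- Existence: for every `b, c` there is some `a` with `N3 a b c = a + b + c`. -/
lemma exists_N3_eq (b c : ℕ) : ∃ a, N3 a b c = a + b + c := by
  induction b with
  | zero => exact ⟨0, by simpa using N3_zero_zero c⟩
  | succ b ih =>
    obtain ⟨A1, hA1⟩ := ih
    set a := A1 + (b + 1) + c with hadef
    refine ⟨a, ?_⟩
    by_contra hne
    have hle := N3_le a (b + 1) c
    -- d := N3 a (b+1) c - a; the option (A1 + 1 + d, b, c) has the same value,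
    -- contradicting that the mex is an excluded value.
    set m := N3 a (b + 1) c with hmdef
    set a' := A1 + 1 + (m - a) with ha'def
    have ha'big : A1 ≤ a' := by omega
    have hval : N3 a' b c = a' + b + c := N3_upclosed hA1 a' ha'big
    have hval2 : N3 a' b c = m := by
      have haLB : a ≤ m := by
        have : a ≤ N3 a (b + 1) c := by
          clear hne hle hval ha'big
          induction a with
          | zero => omega
          | succ n ihn =>
            have := N3_succ_gt n (b + 1) c
            omega
        omega
      omega
    obtain ⟨h1, h2, h3, h4, h5⟩ := N3_mem_T3 a (b + 1) c
    rcases Nat.lt_or_ge a' a with hlt | hge'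
    · exact h4 a' hlt b (by omega) hval2
    · have : a' = a := by omega
      rw [this] at hval2
      exact h2 b (by omega) hval2

/-- For `b, c ≥ 1`: `A(b,c) ≥ min(A(b-1,c), A(b,c-1))`. -/
theorem A3_recursive_lower_bound (b c : ℕ) (hb : 1 ≤ b) (hc : 1 ≤ c) :
    min (A3 (b - 1) c) (A3 b (c - 1)) ≤ A3 b c := by
  have hne : {a : ℕ | N3 a b c = a + b + c}.Nonempty := exists_N3_eq b c
  set a := A3 b c with hadef
  have ha : N3 a b c = a + b + c := Nat.sInf_mem hne
  have hmin : ∀ x < a, N3 x b c ≠ x + b + c := by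
    intro x hx h
    have hmem : x ∈ {y : ℕ | N3 y b c = y + b + c} := h
    have h2 : A3 b c ≤ x := Nat.sInf_le hmem
    omega
  -- the value `a + b + c - 1` must be taken by some option, which can only be
  -- one of `(a-1,b,c)`, `(a,b-1,c)`, `(a,b,c-1)`.
  have hm : a + b + c - 1 < N3 a b c := by omega
  rcases cases_of_notMem_T3 (notMem_T3_of_lt hm) with
    ⟨a', ha', he⟩ | ⟨b', hb', he⟩ | ⟨c', hc', he⟩ | ⟨a', ha', b', hb', he⟩ |
    ⟨a', ha', c', hc', he⟩
  · -- forces a' = a - 1, contradicting minimality of a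
    have h1 := N3_le a' b c
    have ha'' : a' = a - 1 := by omega
    exact absurd he (by rw [ha'']; have := hmin (a - 1) (by omega); omega)
  · -- forces b' = b - 1
    have h1 := N3_le a b' c
    have hb'' : b' = b - 1 := by omega
    have : A3 (b - 1) c ≤ a := Nat.sInf_le (by rw [← hb'']; show N3 a b' c = a + b' + c; omega)
    omega
  · -- forces c' = c - 1
    have h1 := N3_le a b c'
    have hc'' : c' = c - 1 := by omega
    have : A3 b (c - 1) ≤ a := Nat.sInf_le (by rw [← hc'']; show N3 a b c' = a + b + c'; omega)
    omega
  · have h1 := N3_le a' b' c; omega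
  · have h1 := N3_le a' b c'; omega
end
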